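/- Conditional resolution by partial evaluation preserves traces (If case of Lemma A.2): let E be an environment, Γ a partial store, σ a valuation extending Γ, φ a hole-free conditional with free variables in the domain of Γ, and ∂ a partial program. If φ ⇓_{E,Γ} ⊤, then for every completion P ∈ Comp(∂), the program if(φ){P} executed from (E, σ) produces the same trace and final environment as P executed from (E, σ); and if φ ⇓_{E,Γ} ⊥, then for every completion P ∈ Comp(∂), the program if(φ){P} executed from (E, σ) produces the empty trace and leaves E unchanged. Hence rewriting if(φ){∂} to ∂ (respectively skip) during partial evaluation preserves the abstract traces of all completions. -/
import Mathlib


/-!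
A formalization of the robot DSL of the paper: syntax, operational semantics,
trace abstraction, partial programs and completions, abstract environments,
the `ProgToRegex` over-approximation, partial evaluation, and the
compatibility check between partial programs and demonstrations.
-/

/-- Signature: the domain-specific (finite) sets of location types, object
types, property symbols, relation symbols and action names, together with
the location/object instances, program variables, and typing maps. -/
structure Sig where
  LocType : Type
  ObjType : Type
  PropSym : Type
  RelSym : Type
  Act : Type
  Loc : Type
  Obj : Type
  Var : Type
  locTy : Loc → LocType
  objTy : Obj → ObjType
  decEqVar : DecidableEq Var

attribute [instance] Sig.decEqVar

variable {S : Sig}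

/-- Values: location or object instances. -/
inductive Val (S : Sig) where
  | loc (l : S.Loc)
  | obj (o : S.Obj)

/-- Atoms: program variables or literal instances. -/
inductive Atom (S : Sig) where
  | var (v : S.Var)
  | loc (l : S.Loc)
  | obj (o : S.Obj)

def Val.toAtom : Val S → Atom S
  | .loc l => .loc l
  | .obj o => .obj o

/-- Conditionals φ of the DSL (Fig. 3). -/
inductive Cond (S : Sig) where
  | checkProp (p : S.PropSym) (x : Atom S)
  | checkRel (r : S.RelSym) (x y : Atom S)
  | and (φ₁ φ₂ : Cond S)
  | or (φ₁ φ₂ : Cond S)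
  | not (φ : Cond S)

/-- Item lists ρ of the DSL (Fig. 3). -/
inductive ItemList (S : Sig) where
  | scanObj (τ : S.ObjType)
  | scanLoc (τ : S.LocType)

/-- Complete programs π of the DSL (Fig. 3); atomic statements carry the
(declared) types of their arguments. -/
inductive Prog (S : Sig) where
  | actUnary (a : S.Act) (x : Atom S) (τ : S.ObjType)
  | actBinary (a : S.Act) (x₁ x₂ : Atom S) (τ₁ τ₂ : S.ObjType)
  | goto (x : Atom S) (τ : S.LocType)
  | ite (φ : Cond S) (π : Prog S)
  | skip
  | foreach (v : S.Var) (ρ : ItemList S) (π : Prog S)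
  | letN (v : S.Var) (ρ : ItemList S) (n : ℕ)
  | seq (π₁ π₂ : Prog S)

/-- Trace events `goto(l)`, `act(a,o)`, `act(a,o₁,o₂)`. -/
inductive Event (S : Sig) where
  | goto (l : S.Loc)
  | act1 (a : S.Act) (o : S.Obj)
  | act2 (a : S.Act) (o₁ o₂ : S.Obj)

abbrev Trace (S : Sig) := List (Event S)

/-- The abstraction alphabet Σ = {G_τ, A_{a,τ}, A_{a,τ,τ'}}. -/
inductive RSym (S : Sig) where
  | G (τ : S.LocType)
  | A1 (a : S.Act) (τ : S.ObjType)
  | A2 (a : S.Act) (τ₁ τ₂ : S.ObjType)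

/-- The abstraction function α on trace events. -/
def absEvent : Event S → RSym S
  | .goto l => .G (S.locTy l)
  | .act1 a o => .A1 a (S.objTy o)
  | .act2 a o₁ o₂ => .A2 a (S.objTy o₁) (S.objTy o₂)

/-- α extended pointwise to traces. -/
def absTrace (t : Trace S) : List (RSym S) := t.map absEvent

/-- A (concrete) environment E = (L, O, ℓ, I): typed locations, typed objects
at each location, current robot location, and an interpretation of
property / relation symbols. -/
structure Env (S : Sig) where
  locs : S.LocType → List S.Loc
  objs : S.Loc → S.ObjType → List S.Obj
  cur : S.Loc
  propI : S.PropSym → Set S.Obj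
  relI : S.RelSym → Set (S.Obj × S.Obj)

/-- A valuation σ (partial map from variables to values). -/
abbrev VStore (S : Sig) := S.Var → Option (Val S)

def VStore.update (σ : VStore S) (v : S.Var) (x : Val S) : VStore S :=
  fun u => if u = v then some x else σ u

def Atom.eval (σ : VStore S) : Atom S → Option (Val S)
  | .var v => σ v
  | .loc l => some (.loc l)
  | .obj o => some (.obj o)

/-- The ordered list of items returned by a scan operation in environment E. -/
def Env.items (E : Env S) : ItemList S → List (Val S)
  | .scanObj τ => (E.objs E.cur τ).map .obj
  | .scanLoc τ => (E.locs τ).map .loc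

/-- Boolean evaluation φ ⇓_{E,σ} b (Fig. 5). -/
inductive CondEval (E : Env S) (σ : VStore S) : Cond S → Bool → Prop where
  | checkProp_t {p x o} : Atom.eval σ x = some (.obj o) → o ∈ E.propI p →
      CondEval E σ (.checkProp p x) true
  | checkProp_f {p x o} : Atom.eval σ x = some (.obj o) → o ∉ E.propI p →
      CondEval E σ (.checkProp p x) false
  | checkRel_t {r x y o₁ o₂} : Atom.eval σ x = some (.obj o₁) →
      Atom.eval σ y = some (.obj o₂) → (o₁, o₂) ∈ E.relI r →
      CondEval E σ (.checkRel r x y) true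
  | checkRel_f {r x y o₁ o₂} : Atom.eval σ x = some (.obj o₁) →
      Atom.eval σ y = some (.obj o₂) → (o₁, o₂) ∉ E.relI r →
      CondEval E σ (.checkRel r x y) false
  | and {φ₁ φ₂ b₁ b₂} : CondEval E σ φ₁ b₁ → CondEval E σ φ₂ b₂ →
      CondEval E σ (.and φ₁ φ₂) (b₁ && b₂)
  | or {φ₁ φ₂ b₁ b₂} : CondEval E σ φ₁ b₁ → CondEval E σ φ₂ b₂ →
      CondEval E σ (.or φ₁ φ₂) (b₁ || b₂)
  | not {φ b} : CondEval E σ φ b → CondEval E σ (.not φ) (!b)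

/-- The (domain-specific) action-effect relations E →^{a,ō} E' (Fig. 13). -/
structure ActSem (S : Sig) where
  act1 : S.Act → S.Obj → Env S → Env S → Prop
  act2 : S.Act → S.Obj → S.Obj → Env S → Env S → Prop

/-- A configuration (π, E, σ, t) of the small-step semantics. -/
structure Config (S : Sig) where
  prog : Prog S
  env : Env S
  val : VStore S
  tr : Trace S

mutual
  /-- The small-step relation ⇒ of Fig. 4. -/
  inductive Step (A : ActSem S) : Config S → Config S → Prop where
    | seq {π₁ π₁' π₂ : Prog S} {E E' σ σ' t t'} :
        Step A ⟨π₁, E, σ, t⟩ ⟨π₁', E', σ', t'⟩ →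
        Step A ⟨.seq π₁ π₂, E, σ, t⟩ ⟨.seq π₁' π₂, E', σ', t'⟩
    | skip {π E σ t} : Step A ⟨.seq .skip π, E, σ, t⟩ ⟨π, E, σ, t⟩
    | ifT {φ π E σ t} : CondEval E σ φ true →
        Step A ⟨.ite φ π, E, σ, t⟩ ⟨π, E, σ, t⟩
    | ifF {φ π E σ t} : CondEval E σ φ false →
        Step A ⟨.ite φ π, E, σ, t⟩ ⟨.skip, E, σ, t⟩
    | actUnary {a x τ o E E' σ t} :
        Atom.eval σ x = some (.obj o) → S.objTy o = τ → A.act1 a o E E' →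
        Step A ⟨.actUnary a x τ, E, σ, t⟩ ⟨.skip, E', σ, t ++ [.act1 a o]⟩
    | actBinary {a x₁ x₂ τ₁ τ₂ o₁ o₂ E E' σ t} :
        Atom.eval σ x₁ = some (.obj o₁) → Atom.eval σ x₂ = some (.obj o₂) →
        S.objTy o₁ = τ₁ → S.objTy o₂ = τ₂ → A.act2 a o₁ o₂ E E' →
        Step A ⟨.actBinary a x₁ x₂ τ₁ τ₂, E, σ, t⟩ ⟨.skip, E', σ, t ++ [.act2 a o₁ o₂]⟩
    | goto {x τ l E σ t} :
        Atom.eval σ x = some (.loc l) → S.locTy l = τ →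
        Step A ⟨.goto x τ, E, σ, t⟩ ⟨.skip, { E with cur := l }, σ, t ++ [.goto l]⟩
    | letN {v ρ n x E σ t} :
        (E.items ρ)[n]? = some x →
        Step A ⟨.letN v ρ n, E, σ, t⟩ ⟨.skip, E, VStore.update σ v x, t⟩
    | foreach {v ρ π E E' σ t t'} :
        LoopRun A π v (E.items ρ) E σ t E' t' →
        Step A ⟨.foreach v ρ π, E, σ, t⟩ ⟨.skip, E', σ, t'⟩

  /-- Reflexive-transitive closure ⇒* of the small-step relation. -/
  inductive StepStar (A : ActSem S) : Config S → Config S → Prop where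
    | refl (c : Config S) : StepStar A c c
    | head {c₁ c₂ c₃ : Config S} : Step A c₁ c₂ → StepStar A c₂ c₃ → StepStar A c₁ c₃

  /-- Iterated execution of a loop body, once per scanned item, binding the
  loop variable to the successive items (premises of FOREACH-OBJ/LOC in Fig. 4). -/
  inductive LoopRun (A : ActSem S) :
      Prog S → S.Var → List (Val S) → Env S → VStore S → Trace S → Env S → Trace S →
      Prop where
    | nil {π v E σ t} : LoopRun A π v [] E σ t E t
    | cons {π v x xs E E₁ E₂ σ σ₁ t t₁ t₂} :
        StepStar A ⟨π, E, VStore.update σ v x, t⟩ ⟨.skip, E₁, σ₁, t₁⟩ →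
        LoopRun A π v xs E₁ σ t₁ E₂ t₂ →
        LoopRun A π v (x :: xs) E σ t E₂ t₂
end

/-- The empty (Nil) valuation. -/
def initVal (S : Sig) : VStore S := fun _ => none

/-- `Runs A π E t` means π(E) = t, i.e. (π, E, Nil, Nil) ⇒* (skip, _, _, t). -/
def Runs (A : ActSem S) (π : Prog S) (E : Env S) (t : Trace S) : Prop :=
  ∃ E' σ', StepStar A ⟨π, E, initVal S, []⟩ ⟨.skip, E', σ', t⟩

/-! ### Partial programs (programs with holes) -/

inductive PAtom (S : Sig) where
  | mk (x : Atom S)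
  | hole

inductive PCond (S : Sig) where
  | checkProp (p : S.PropSym) (x : PAtom S)
  | checkRel (r : S.RelSym) (x y : PAtom S)
  | and (φ₁ φ₂ : PCond S)
  | or (φ₁ φ₂ : PCond S)
  | not (φ : PCond S)
  | hole

inductive PItem (S : Sig) where
  | scanObj (τ : S.ObjType)
  | scanLoc (τ : S.LocType)
  | scanObjHole
  | scanLocHole
  | hole

inductive PProg (S : Sig) where
  | actUnary (a : S.Act) (x : PAtom S) (τ : S.ObjType)
  | actBinary (a : S.Act) (x₁ x₂ : PAtom S) (τ₁ τ₂ : S.ObjType)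
  | goto (x : PAtom S) (τ : S.LocType)
  | ite (φ : PCond S) (π : PProg S)
  | skip
  | foreach (v : S.Var) (ρ : PItem S) (π : PProg S)
  | letN (v : S.Var) (ρ : PItem S) (n : Option ℕ)
  | seq (π₁ π₂ : PProg S)
  | hole

/-- Embedding of conditionals into partial conditionals. -/
def PCond.ofCond : Cond S → PCond S
  | .checkProp p x => .checkProp p (.mk x)
  | .checkRel r x y => .checkRel r (.mk x) (.mk y)
  | .and φ₁ φ₂ => .and (PCond.ofCond φ₁) (PCond.ofCond φ₂)
  | .or φ₁ φ₂ => .or (PCond.ofCond φ₁) (PCond.ofCond φ₂)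
  | .not φ => .not (PCond.ofCond φ)

inductive CompA : PAtom S → Atom S → Prop where
  | mk (x : Atom S) : CompA (.mk x) x
  | hole (x : Atom S) : CompA .hole x

inductive CompC : PCond S → Cond S → Prop where
  | checkProp {p x x'} : CompA x x' → CompC (.checkProp p x) (.checkProp p x')
  | checkRel {r x y x' y'} : CompA x x' → CompA y y' →
      CompC (.checkRel r x y) (.checkRel r x' y')
  | and {φ₁ φ₂ φ₁' φ₂'} : CompC φ₁ φ₁' → CompC φ₂ φ₂' → CompC (.and φ₁ φ₂) (.and φ₁' φ₂')
  | or {φ₁ φ₂ φ₁' φ₂'} : CompC φ₁ φ₁' → CompC φ₂ φ₂' → CompC (.or φ₁ φ₂) (.or φ₁' φ₂')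
  | not {φ φ'} : CompC φ φ' → CompC (.not φ) (.not φ')
  | hole (φ : Cond S) : CompC .hole φ

inductive CompI : PItem S → ItemList S → Prop where
  | scanObj (τ) : CompI (.scanObj τ) (.scanObj τ)
  | scanLoc (τ) : CompI (.scanLoc τ) (.scanLoc τ)
  | scanObjHole (τ) : CompI .scanObjHole (.scanObj τ)
  | scanLocHole (τ) : CompI .scanLocHole (.scanLoc τ)
  | hole (ρ : ItemList S) : CompI .hole ρ

/-- `CompP ∂ P` : the complete program P is a completion of the partial program ∂. -/
inductive CompP : PProg S → Prog S → Prop where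
  | actUnary {a x x' τ} : CompA x x' → CompP (.actUnary a x τ) (.actUnary a x' τ)
  | actBinary {a x₁ x₂ x₁' x₂' τ₁ τ₂} : CompA x₁ x₁' → CompA x₂ x₂' →
      CompP (.actBinary a x₁ x₂ τ₁ τ₂) (.actBinary a x₁' x₂' τ₁ τ₂)
  | goto {x x' τ} : CompA x x' → CompP (.goto x τ) (.goto x' τ)
  | ite {φ φ' π π'} : CompC φ φ' → CompP π π' → CompP (.ite φ π) (.ite φ' π')
  | skip : CompP .skip .skip
  | foreach {v ρ ρ' π π'} : CompI ρ ρ' → CompP π π' →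
      CompP (.foreach v ρ π) (.foreach v ρ' π')
  | letSome {v ρ ρ' n} : CompI ρ ρ' → CompP (.letN v ρ (some n)) (.letN v ρ' n)
  | letNone {v ρ ρ'} (n : ℕ) : CompI ρ ρ' → CompP (.letN v ρ none) (.letN v ρ' n)
  | seq {π₁ π₂ π₁' π₂'} : CompP π₁ π₁' → CompP π₂ π₂' → CompP (.seq π₁ π₂) (.seq π₁' π₂')
  | hole (π : Prog S) : CompP .hole π

/-- Comp(∂): the set of completions of a partial program. -/
def Comp (p : PProg S) : Set (Prog S) := { π | CompP p π }

/-- Atomic partial statements (actUnary, actBinary, goto). -/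
def PProg.Atomic : PProg S → Prop
  | .actUnary _ _ _ => True
  | .actBinary _ _ _ _ _ => True
  | .goto _ _ => True
  | _ => False

/-! ### Abstract environments -/

/-- An abstract environment Ah = (CurLocs, Locs, Objs). -/
structure AbsEnv (S : Sig) where
  curLocs : Set S.Loc
  locs : S.LocType → Set S.Loc
  objs : S.Loc → S.ObjType → Set S.Obj

/-- α(E) = ({ℓ}, E.locs, E.objs): abstraction of a concrete environment. -/
def Env.abs (E : Env S) : AbsEnv S :=
  ⟨{E.cur}, fun τ => {l | l ∈ E.locs τ}, fun l τ => {o | o ∈ E.objs l τ}⟩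

/-- A concrete environment is over-approximated by an abstract one. -/
def EnvAbs (E : Env S) (Ah : AbsEnv S) : Prop :=
  E.cur ∈ Ah.curLocs ∧ (∀ τ l, l ∈ E.locs τ → l ∈ Ah.locs τ) ∧
    ∀ l τ o, o ∈ E.objs l τ → o ∈ Ah.objs l τ

/-- Ah ⊑ Ah'. -/
def AbsEnv.le (Ah₁ Ah₂ : AbsEnv S) : Prop :=
  (∀ τ, Ah₁.locs τ ⊆ Ah₂.locs τ) ∧
    ∀ τl l, l ∈ Ah₁.locs τl → ∀ τ, Ah₁.objs l τ ⊆ Ah₂.objs l τ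

/-- Ah ⊔ Ah' (pointwise join). -/
def AbsEnv.join (Ah₁ Ah₂ : AbsEnv S) : AbsEnv S :=
  ⟨Ah₁.curLocs ∪ Ah₂.curLocs, fun τ => Ah₁.locs τ ∪ Ah₂.locs τ,
    fun l τ => Ah₁.objs l τ ∪ Ah₂.objs l τ⟩

/-- The completely unknown abstract environment. -/
def AbsEnv.top (S : Sig) : AbsEnv S :=
  ⟨Set.univ, fun _ => Set.univ, fun _ _ => Set.univ⟩

/-- A domain instantiation: the concrete action-effect relations together with
the (domain-specific) abstract transformer `UpdateAbsEnv` for atomic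
statements (Fig. 15), required to soundly over-approximate the concrete
effects of atomic statements. -/
structure Dom (S : Sig) extends ActSem S where
  updAbs : AbsEnv S → PProg S → AbsEnv S
  updAbs_sound : ∀ (s : PProg S) (P : Prog S), s.Atomic → CompP s P →
    ∀ (E : Env S) (σ : VStore S) (t : Trace S) (c' : Config S) (Ah : AbsEnv S),
      Step toActSem ⟨P, E, σ, t⟩ c' → EnvAbs E Ah → EnvAbs c'.env (updAbs Ah s)

/-- Possible cardinalities of the result of a scan operation (Fig. 8);
`⊤ : ℕ∞` plays the role of the unknown cardinality ⋆. -/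
inductive ScanCard (Ah : AbsEnv S) : PItem S → Set ℕ∞ → Prop where
  | locKnown (τ) : ScanCard Ah (.scanLoc τ) {(Ah.locs τ).encard}
  | locHole : ScanCard Ah .scanLocHole {c | ∃ τ, c = (Ah.locs τ).encard}
  | objKnown (τ) : ScanCard Ah (.scanObj τ)
      {c | ∃ l ∈ Ah.curLocs, c = (Ah.objs l τ).encard}
  | objHole : ScanCard Ah .scanObjHole
      {c | ∃ l ∈ Ah.curLocs, ∃ τ, c = (Ah.objs l τ).encard}
  | hole : ScanCard Ah .hole
      ({c | ∃ τ, c = (Ah.locs τ).encard} ∪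
        {c | ∃ l ∈ Ah.curLocs, ∃ τ, c = (Ah.objs l τ).encard})

/-- `langCPow L c` is the language Lⁿ for c = n finite, and L* for c = ⋆ (= ⊤). -/
noncomputable def langCPow {α : Type*} (L : Language α) (c : ℕ∞) : Language α :=
  if c = ⊤ then KStar.kstar L else L ^ c.toNat

/-- The ProgToRegex judgment Ah ⊢ ∂ : Ah', r of Figs. 8–9: under input abstract
environment Ah, the behavior of the partial program ∂ is over-approximated by
the regular expression r, with output abstract environment Ah'. -/
inductive ToRegex (D : Dom S) :
    AbsEnv S → PProg S → AbsEnv S → RegularExpression (RSym S) → Prop where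
  | actUnary {Ah a x τ} :
      ToRegex D Ah (.actUnary a x τ) (D.updAbs Ah (.actUnary a x τ)) (.char (.A1 a τ))
  | actBinary {Ah a x₁ x₂ τ₁ τ₂} :
      ToRegex D Ah (.actBinary a x₁ x₂ τ₁ τ₂)
        (D.updAbs Ah (.actBinary a x₁ x₂ τ₁ τ₂)) (.char (.A2 a τ₁ τ₂))
  | goto {Ah x τ} :
      ToRegex D Ah (.goto x τ) (D.updAbs Ah (.goto x τ)) (.char (.G τ))
  | seq {Ah Ah₁ Ah₂ π₁ π₂ r₁ r₂} : ToRegex D Ah π₁ Ah₁ r₁ → ToRegex D Ah₁ π₂ Ah₂ r₂ →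
      ToRegex D Ah (.seq π₁ π₂) Ah₂ (r₁ * r₂)
  | skip {Ah} : ToRegex D Ah .skip Ah 1
  | ite {Ah Ah' φ π r} : ToRegex D Ah π Ah' r →
      ToRegex D Ah (.ite φ π) (Ah.join Ah') (r + 1)
  | letN {Ah v ρ n} : ToRegex D Ah (.letN v ρ n) Ah 1
  | foreach {Ah Ah' v ρ π r R Θ} :
      ScanCard Ah ρ Θ → AbsEnv.le Ah Ah' → ToRegex D Ah' π Ah' r →
      (∀ w, w ∈ R.matches' ↔ ∃ c ∈ Θ, w ∈ langCPow r.matches' c) →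
      ToRegex D Ah (.foreach v ρ π) Ah' R
  | hole {Ah R} : (∀ w, w ∈ R.matches') → ToRegex D Ah .hole (AbsEnv.top S) R

/-! ### Substitution -/

def Atom.subst (v : S.Var) (x : Val S) : Atom S → Atom S
  | .var u => if u = v then x.toAtom else .var u
  | .loc l => .loc l
  | .obj o => .obj o

def Cond.subst (v : S.Var) (x : Val S) : Cond S → Cond S
  | .checkProp p a => .checkProp p (a.subst v x)
  | .checkRel r a b => .checkRel r (a.subst v x) (b.subst v x)
  | .and φ₁ φ₂ => .and (φ₁.subst v x) (φ₂.subst v x)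
  | .or φ₁ φ₂ => .or (φ₁.subst v x) (φ₂.subst v x)
  | .not φ => .not (φ.subst v x)

/-- Syntactic substitution π[v ↦ x] of a concrete instance for a variable. -/
def Prog.subst (v : S.Var) (x : Val S) : Prog S → Prog S
  | .actUnary a y τ => .actUnary a (y.subst v x) τ
  | .actBinary a y₁ y₂ τ₁ τ₂ => .actBinary a (y₁.subst v x) (y₂.subst v x) τ₁ τ₂
  | .goto y τ => .goto (y.subst v x) τ
  | .ite φ π => .ite (φ.subst v x) (π.subst v x)
  | .skip => .skip
  | .foreach u ρ π => .foreach u ρ (if u = v then π else π.subst v x)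
  | .letN u ρ n => .letN u ρ n
  | .seq π₁ π₂ => .seq (π₁.subst v x) (π₂.subst v x)

def PAtom.subst (v : S.Var) (x : Val S) : PAtom S → PAtom S
  | .mk a => .mk (a.subst v x)
  | .hole => .hole

def PCond.subst (v : S.Var) (x : Val S) : PCond S → PCond S
  | .checkProp p a => .checkProp p (a.subst v x)
  | .checkRel r a b => .checkRel r (a.subst v x) (b.subst v x)
  | .and φ₁ φ₂ => .and (φ₁.subst v x) (φ₂.subst v x)
  | .or φ₁ φ₂ => .or (φ₁.subst v x) (φ₂.subst v x)
  | .not φ => .not (φ.subst v x)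
  | .hole => .hole

def PProg.subst (v : S.Var) (x : Val S) : PProg S → PProg S
  | .actUnary a y τ => .actUnary a (y.subst v x) τ
  | .actBinary a y₁ y₂ τ₁ τ₂ => .actBinary a (y₁.subst v x) (y₂.subst v x) τ₁ τ₂
  | .goto y τ => .goto (y.subst v x) τ
  | .ite φ π => .ite (φ.subst v x) (π.subst v x)
  | .skip => .skip
  | .foreach u ρ π => .foreach u ρ (if u = v then π else π.subst v x)
  | .letN u ρ n => .letN u ρ n
  | .seq π₁ π₂ => .seq (π₁.subst v x) (π₂.subst v x)
  | .hole => .hole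

/-- Sequential composition of a list of programs. -/
def Prog.seqList : List (Prog S) → Prog S
  | [] => .skip
  | π :: rest => .seq π (Prog.seqList rest)

def PProg.seqList : List (PProg S) → PProg S
  | [] => .skip
  | π :: rest => .seq π (PProg.seqList rest)

/-! ### Partial evaluation (Fig. 14) -/

/-- A partial store Γ: the (possibly unknown) current location of the robot
together with a partial map from variables to values. -/
structure PStore (S : Sig) where
  cur : Option S.Loc
  vals : VStore S

/-- The initial partial store for partially evaluating on environment E. -/
def PStore.init (E : Env S) : PStore S := ⟨some E.cur, fun _ => none⟩

/-- Partial evaluation of item lists (scans with known arguments). -/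
inductive IEval (E : Env S) (Γ : PStore S) : PItem S → List (Val S) → Prop where
  | scanObj {τ l} : Γ.cur = some l → IEval E Γ (.scanObj τ) ((E.objs l τ).map .obj)
  | scanLoc {τ} : IEval E Γ (.scanLoc τ) ((E.locs τ).map .loc)

/-- Partial evaluation Γ, E ⊢ ∂ → ∂' of partial programs (Fig. 14). -/
inductive PEval (E : Env S) (Γ : PStore S) : PProg S → PProg S → Prop where
  | refl (p : PProg S) : PEval E Γ p p
  | seq {π₁ π₁' π₂ π₂'} : PEval E Γ π₁ π₁' → PEval E Γ π₂ π₂' →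
      PEval E Γ (.seq π₁ π₂) (.seq π₁' π₂')
  | letSkip {v ρ n L x} : IEval E Γ ρ L → L[n]? = some x → Γ.vals v = some x →
      PEval E Γ (.letN v ρ (some n)) .skip
  | ifT {φc π} : CondEval E Γ.vals φc true →
      PEval E Γ (.ite (PCond.ofCond φc) π) π
  | ifF {φc π} : CondEval E Γ.vals φc false →
      PEval E Γ (.ite (PCond.ofCond φc) π) .skip
  | foreach {v ρ L π π'} : IEval E Γ ρ L →
      PEval E Γ (PProg.seqList (L.map fun i => π.subst v i)) π' →
      PEval E Γ (.foreach v ρ π) π'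

/-! ### Demonstrations and the compatibility check -/

/-- A demonstration δ = (E, t). -/
abbrev Demo (S : Sig) := Env S × Trace S

/-- π ⊨ δ. -/
def Sat (D : Dom S) (π : Prog S) (δ : Demo S) : Prop := Runs D.toActSem π δ.1 δ.2

/-- π ⊨ 𝒟. -/
def SatAll (D : Dom S) (π : Prog S) (𝒟 : Set (Demo S)) : Prop := ∀ δ ∈ 𝒟, Sat D π δ

/-- Compatible(∂, 𝒟): for every demonstration (E, t) ∈ 𝒟, the abstract string
α(t) is accepted by (every) regex derived for PartialEval(∂, E) under α(E). -/
def Compatible (D : Dom S) (p : PProg S) (𝒟 : Set (Demo S)) : Prop :=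
  ∀ δ ∈ 𝒟, ∀ (p' : PProg S) (Ah' : AbsEnv S) (r : RegularExpression (RSym S)),
    PEval δ.1 (PStore.init δ.1) p p' → ToRegex D (Env.abs δ.1) p' Ah' r →
      absTrace δ.2 ∈ r.matches'

/-! ### Auxiliary notions used in the lemma statements -/

def Atom.varSet : Atom S → Set S.Var
  | .var v => {v}
  | _ => ∅

/-- Free variables of a conditional. -/
def Cond.vars : Cond S → Set S.Var
  | .checkProp _ x => x.varSet
  | .checkRel _ x y => x.varSet ∪ y.varSet
  | .and φ₁ φ₂ => φ₁.vars ∪ φ₂.vars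
  | .or φ₁ φ₂ => φ₁.vars ∪ φ₂.vars
  | .not φ => φ.vars

/-- The character α(s) assigned to a complete atomic statement. -/
def Prog.atomChar : Prog S → Option (RSym S)
  | .actUnary a _ τ => some (.A1 a τ)
  | .actBinary a _ _ τ₁ τ₂ => some (.A2 a τ₁ τ₂)
  | .goto _ τ => some (.G τ)
  | _ => none

/-- Variables occurring in the arguments of an atomic statement. -/
def Prog.argVars : Prog S → Set S.Var
  | .actUnary _ x _ => x.varSet
  | .actBinary _ x y _ _ => x.varSet ∪ y.varSet
  | .goto x _ => x.varSet
  | _ => ∅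

/-- Atom evaluation is monotone in the store. -/
lemma atomEval_mono {S : Sig} {Γ σ : VStore S}
    (hext : ∀ (v : S.Var) (x : Val S), Γ v = some x → σ v = some x) :
    ∀ (x : Atom S) (w : Val S), Atom.eval Γ x = some w → Atom.eval σ x = some w := by
  intro x w h
  cases x with
  | var v => exact hext v w h
  | loc l => exact h
  | obj o => exact h

/-- Conditional evaluation transfers from a partial store to any extension. -/
lemma condEval_mono {S : Sig} {E : Env S} {Γ σ : VStore S}
    (hext : ∀ (v : S.Var) (x : Val S), Γ v = some x → σ v = some x)
    {φ : Cond S} {b : Bool} (h : CondEval E Γ φ b) : CondEval E σ φ b := by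
  induction h with
  | checkProp_t h1 h2 => exact CondEval.checkProp_t (atomEval_mono hext _ _ h1) h2
  | checkProp_f h1 h2 => exact CondEval.checkProp_f (atomEval_mono hext _ _ h1) h2
  | checkRel_t h1 h2 h3 =>
      exact CondEval.checkRel_t (atomEval_mono hext _ _ h1) (atomEval_mono hext _ _ h2) h3
  | checkRel_f h1 h2 h3 =>
      exact CondEval.checkRel_f (atomEval_mono hext _ _ h1) (atomEval_mono hext _ _ h2) h3
  | and _ _ ih1 ih2 => exact CondEval.and ih1 ih2
  | or _ _ ih1 ih2 => exact CondEval.or ih1 ih2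
  | not _ ih => exact CondEval.not ih

/-- Conditional evaluation is deterministic. -/
lemma condEval_det {S : Sig} {E : Env S} {σ : VStore S} {φ : Cond S} {b b' : Bool}
    (h : CondEval E σ φ b) (h' : CondEval E σ φ b') : b = b' := by
  induction h generalizing b' with
  | @checkProp_t p x o h1 h2 =>
      cases h' with
      | checkProp_t h1' h2' => rfl
      | checkProp_f h1' h2' =>
          rw [h1] at h1'
          cases h1'
          exact absurd h2 h2'
  | @checkProp_f p x o h1 h2 =>
      cases h' with
      | checkProp_f h1' h2' => rfl
      | checkProp_t h1' h2' =>
          rw [h1] at h1'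
          cases h1'
          exact absurd h2' h2
  | @checkRel_t r x y o₁ o₂ h1 h2 h3 =>
      cases h' with
      | checkRel_t h1' h2' h3' => rfl
      | checkRel_f h1' h2' h3' =>
          rw [h1] at h1'; rw [h2] at h2'
          cases h1'; cases h2'
          exact absurd h3 h3'
  | @checkRel_f r x y o₁ o₂ h1 h2 h3 =>
      cases h' with
      | checkRel_f h1' h2' h3' => rfl
      | checkRel_t h1' h2' h3' =>
          rw [h1] at h1'; rw [h2] at h2'
          cases h1'; cases h2'
          exact absurd h3' h3
  | and _ _ ih1 ih2 =>
      cases h' with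
      | and hh1 hh2 => rw [ih1 hh1, ih2 hh2]
  | or _ _ ih1 ih2 =>
      cases h' with
      | or hh1 hh2 => rw [ih1 hh1, ih2 hh2]
  | not _ ih =>
      cases h' with
      | not hh => rw [ih hh]

/-- There is no step out of a `skip` configuration. -/
lemma no_step_skip {S : Sig} {A : ActSem S} {E : Env S} {σ : VStore S} {t : Trace S}
    {c : Config S} (h : Step A ⟨.skip, E, σ, t⟩ c) : False := by
  cases h

/-- StepStar from `skip` is trivial. -/
lemma stepStar_skip {S : Sig} {A : ActSem S} {E : Env S} {σ : VStore S} {t : Trace S}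
    {c : Config S} (h : StepStar A ⟨.skip, E, σ, t⟩ c) : c = ⟨.skip, E, σ, t⟩ := by
  cases h with
  | refl => rfl
  | head hs _ => exact absurd hs no_step_skip

/-- **Conditional resolution by partial evaluation preserves traces** (If case
of Lemma A.2): if σ extends the partial store Γ and φ ⇓_{E,Γ} ⊤, then for every
completion P ∈ Comp(∂), if(φ){P} executed from (E, σ) produces the same trace
and final environment as P; if φ ⇓_{E,Γ} ⊥, then if(φ){P} produces the empty
trace and leaves E unchanged. -/
theorem if_resolution_preserves_traces {S : Sig} (A : ActSem S) (E : Env S)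
    (Γ σ : VStore S)
    (hext : ∀ (v : S.Var) (x : Val S), Γ v = some x → σ v = some x)
    (φ : Cond S) (hfv : ∀ v ∈ φ.vars, (Γ v).isSome) (p : PProg S) :
    (CondEval E Γ φ true → ∀ P ∈ Comp p,
      ∀ (E' : Env S) (σ' : VStore S) (t : Trace S),
        (StepStar A ⟨.ite φ P, E, σ, []⟩ ⟨.skip, E', σ', t⟩ ↔
          StepStar A ⟨P, E, σ, []⟩ ⟨.skip, E', σ', t⟩)) ∧
    (CondEval E Γ φ false → ∀ P ∈ Comp p,
      ∀ (E' : Env S) (σ' : VStore S) (t : Trace S),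
        StepStar A ⟨.ite φ P, E, σ, []⟩ ⟨.skip, E', σ', t⟩ → t = [] ∧ E' = E) := by
  constructor
  · intro hT P _ E' σ' t
    have hTσ : CondEval E σ φ true := condEval_mono hext hT
    constructor
    · intro h
      cases h with
      | head hs hrest =>
          cases hs with
          | ifT _ => exact hrest
          | ifF hF => exact absurd (condEval_det hTσ hF) (by simp)
    · intro h
      exact StepStar.head (Step.ifT hTσ) h
  · intro hF P _ E' σ' t h
    have hFσ : CondEval E σ φ false := condEval_mono hext hF
    cases h with
    | head hs hrest =>
        cases hs with
        | ifT hT => exact absurd (condEval_det hFσ hT) (by simp)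
        | ifF _ =>
            have := stepStar_skip hrest
            cases this
            exact ⟨rfl, rfl⟩
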